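/- Let A be an m × m real matrix such that Ax ∈ S^{m-1} for every x ∈ S^{m-1}, and suppose Ax ≻ x for all x ∈ S^{m-1}. Then every column of A is a standard basis vector; that is, for each i ∈ {1,…,m} there exists k with Ae_i = e_k. -/

import Mathlib

open Finset Filter Topology

/-- `Majorizes y x` means `x ≺ y`: for every `k`, the sum of the `k` largest components of
`x` is at most the sum of the `k` largest components of `y`.  This is expressed via the
standard equivalent form: every subset-sum of `x` is dominated by some subset-sum of `y`
over a subset of the same cardinality (the maximum of the latter over subsets of
cardinality `k` being exactly the sum of the `k` largest components of `y`). -/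
def Majorizes {m : ℕ} (y x : Fin m → ℝ) : Prop :=
  ∀ A : Finset (Fin m), ∃ B : Finset (Fin m),
    B.card = A.card ∧ ∑ i ∈ A, x i ≤ ∑ i ∈ B, y i

/-- The quadratic operator `(Vx)_k = ∑_{i,j} p_{ij,k} x_i x_j` with heredity
coefficients `p`. -/
def QSO {m : ℕ} (p : Fin m → Fin m → Fin m → ℝ) (x : Fin m → ℝ) : Fin m → ℝ :=
  fun k => ∑ i, ∑ j, p i j k * x i * x j

/-- Conditions on heredity coefficients: symmetry, nonnegativity, stochasticity. -/
def IsQSOCoeff {m : ℕ} (p : Fin m → Fin m → Fin m → ℝ) : Prop :=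
  (∀ i j k, p i j k = p j i k) ∧ (∀ i j k, 0 ≤ p i j k) ∧ (∀ i j, ∑ k, p i j k = 1)

/-- Dissipativity of the q.s.o.: `V x ≻ x` for every `x` in the simplex. -/
def IsDissipative {m : ℕ} (p : Fin m → Fin m → Fin m → ℝ) : Prop :=
  ∀ x ∈ stdSimplex ℝ (Fin m), Majorizes (QSO p x) x

/-- The `k`-th vertex of the simplex (the `k`-th standard basis vector). -/
def vertex {m : ℕ} (k : Fin m) : Fin m → ℝ := fun j => if j = k then 1 else 0

/-- The ω-limit set of the trajectory of `x` under `V`: the set of all limit points of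
the sequence `(Vⁿ x)ₙ`. -/
def omegaLimitSet {m : ℕ} (V : (Fin m → ℝ) → Fin m → ℝ) (x : Fin m → ℝ) :
    Set (Fin m → ℝ) :=
  {y | ∃ φ : ℕ → ℕ, StrictMono φ ∧ Tendsto (fun n => V^[φ n] x) atTop (𝓝 y)}

/-! A singleton subset-sum of `e_i` equals `1`, so majorization forces some coordinate of
`A e_i` to be at least `1`; a point of the simplex with such a coordinate is a vertex. -/

lemma vertex_eq_single {m : ℕ} (k : Fin m) : vertex k = Pi.single k (1 : ℝ) := by
  funext j
  simp [vertex, Pi.single_apply]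

lemma vertex_mem_stdSimplex {m : ℕ} (k : Fin m) : vertex k ∈ stdSimplex ℝ (Fin m) := by
  rw [vertex_eq_single]
  exact single_mem_stdSimplex ℝ k

lemma Majorizes.exists_le {m : ℕ} {y x : Fin m → ℝ} (h : Majorizes y x) (i : Fin m) :
    ∃ k, x i ≤ y k := by
  obtain ⟨B, hB, hle⟩ := h {i}
  rw [card_singleton, card_eq_one] at hB
  obtain ⟨k, rfl⟩ := hB
  exact ⟨k, by simpa using hle⟩

lemma eq_single_of_mem_stdSimplex_of_one_le {𝕜 ι : Type*} [Ring 𝕜] [PartialOrder 𝕜]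
    [IsOrderedRing 𝕜] [Fintype ι] [DecidableEq ι] {x : ι → 𝕜} (hx : x ∈ stdSimplex 𝕜 ι)
    {k : ι} (hk : 1 ≤ x k) : x = Pi.single k 1 := by
  have hxk : x k = 1 := le_antisymm (mem_Icc_of_mem_stdSimplex hx k).2 hk
  have hrest : ∑ j ∈ univ.erase k, x j = 0 := by
    have := add_sum_erase univ x (mem_univ k)
    rw [hx.2, hxk] at this
    exact left_eq_add.mp this.symm
  funext j
  by_cases hj : j = k
  · subst hj
    simp [hxk]
  · rw [Pi.single_eq_of_ne hj]
    exact (sum_eq_zero_iff_of_nonneg fun j _ => hx.1 j).mp hrest j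
      (mem_erase.mpr ⟨hj, mem_univ j⟩)

/-- a linear operator mapping the simplex into itself with `Ax ≻ x` on the
simplex sends every vertex to a vertex (every column of `A` is a standard basis
vector). -/
theorem stmt12 {m : ℕ} (A : Matrix (Fin m) (Fin m) ℝ)
    (h1 : ∀ x ∈ stdSimplex ℝ (Fin m), A.mulVec x ∈ stdSimplex ℝ (Fin m))
    (h2 : ∀ x ∈ stdSimplex ℝ (Fin m), Majorizes (A.mulVec x) x) :
    ∀ i : Fin m, ∃ k : Fin m, A.mulVec (vertex i) = vertex k := by
  intro i
  have hv := vertex_mem_stdSimplex i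
  obtain ⟨k, hk⟩ := (h2 _ hv).exists_le i
  refine ⟨k, ?_⟩
  rw [vertex_eq_single k]
  exact eq_single_of_mem_stdSimplex_of_one_le (h1 _ hv) (by simpa [vertex] using hk)
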